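/- arXiv:2501.15667 — 4 statements merged into one kernel-verified Lean document; each statement's English description precedes it below -/
import Mathlib

section
/- For every positive integer n, every rational number c, and every number of variables N ≥ n + 2, the polynomial M_{(2,1^n)} + c·M_{(1^{n+2})} in the polynomial ring ℚ[x_1, …, x_N] is not a symmetric polynomial (i.e., it is not invariant under every permutation of the variables x_1, …, x_N). (This is the content of the paper's Lemma that the quasisymmetric Schur function S_{(2,1^n)} does not lie in the algebra of symmetric functions, after expanding it as M_{(2,1^n)} plus a scalar multiple of M_{(1^{n+2})}.) -/
/-!
Read off coefficients: the monomial `x₁² x₂ ⋯ x_{n+1}` occurs in `M_{(2,1^n)}`, but its image under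
the swap of `x₁` and `x_{n+1}` does not, since the first variable of every monomial of `M_{(2,1^n)}`
carries the exponent `2`, and as `n ≥ 1` the swap moves the square away from `x₁`. Neither monomial
occurs in the square-free `M_{(1^{n+2})}`, so no multiple of it can repair the asymmetry.
-/

open Classical in
/-- The monomial quasisymmetric polynomial `M_α` in `N` variables:
the sum over strictly increasing tuples `i₁ < i₂ < ⋯ < i_{ℓ(α)}` of
`x_{i₁}^{α₁} ⋯ x_{i_ℓ}^{α_ℓ}`. -/
noncomputable def monQSym (N : ℕ) (α : List ℕ) : MvPolynomial (Fin N) ℚ :=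
  ∑ f ∈ Finset.univ.filter (fun f : Fin α.length → Fin N => StrictMono f),
    ∏ i : Fin α.length, (MvPolynomial.X (f i)) ^ α.get i

open MvPolynomial Finsupp

section TupleExponent

variable {ι : Type*} {k : ℕ}

noncomputable def tupleExponent (a : Fin k → ℕ) (f : Fin k → ι) : ι →₀ ℕ :=
  ∑ i, single (f i) (a i)

lemma tupleExponent_apply_of_injective (a : Fin k → ℕ) {f : Fin k → ι}
    (hf : Function.Injective f) (j : Fin k) : tupleExponent a f (f j) = a j := by
  classical
  simp only [tupleExponent, finsetSum_apply, single_apply]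
  rw [Finset.sum_eq_single j (fun i _ hij => if_neg (hf.ne hij)) (by simp), if_pos rfl]

lemma exists_eq_of_tupleExponent_apply_ne_zero {a : Fin k → ℕ} {f : Fin k → ι} {x : ι}
    (hx : tupleExponent a f x ≠ 0) : ∃ i, f i = x := by
  classical
  by_contra! h
  simp only [tupleExponent, finsetSum_apply, single_apply] at hx
  exact hx (Finset.sum_eq_zero fun i _ => if_neg (h i))

end TupleExponent

section MonQSym

variable {N : ℕ} {α : List ℕ} {d : Fin N →₀ ℕ}

open Classical in
lemma coeff_monQSym (N : ℕ) (α : List ℕ) (d : Fin N →₀ ℕ) :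
    coeff d (monQSym N α) =
      (Finset.univ.filter fun f : Fin α.length → Fin N =>
        StrictMono f ∧ tupleExponent α.get f = d).card := by
  have hmonomial (f : Fin α.length → Fin N) :
      ∏ i, (X (f i) : MvPolynomial (Fin N) ℚ) ^ α.get i = monomial (tupleExponent α.get f) 1 := by
    simp only [X_pow_eq_monomial, tupleExponent, monomial_sum_one]
  simp only [monQSym, coeff_sum, hmonomial, coeff_monomial, Finset.sum_boole,
    Finset.filter_filter]

lemma coeff_monQSym_eq_zero_iff :
    coeff d (monQSym N α) = 0 ↔ ∀ f : Fin α.length → Fin N, StrictMono f →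
      tupleExponent α.get f ≠ d := by
  classical
  simp [coeff_monQSym, Finset.filter_eq_empty_iff]

lemma coeff_monQSym_tupleExponent_ne_zero {f : Fin α.length → Fin N} (hf : StrictMono f) :
    coeff (tupleExponent α.get f) (monQSym N α) ≠ 0 :=
  fun h => coeff_monQSym_eq_zero_iff.1 h f hf rfl

lemma coeff_monQSym_eq_zero_of_notMem {x : Fin N} (hx : d x ≠ 0) (hα : d x ∉ α) :
    coeff d (monQSym N α) = 0 := by
  refine coeff_monQSym_eq_zero_iff.2 fun f hf hfd => ?_
  subst hfd
  obtain ⟨i, rfl⟩ := exists_eq_of_tupleExponent_apply_ne_zero hx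
  rw [tupleExponent_apply_of_injective _ hf.injective] at hα
  exact hα (List.get_mem _ _)

/-- The first variable occurring in a monomial of `M_{a :: β}` carries the exponent `a`. -/
lemma coeff_monQSym_cons_eq_zero {a : ℕ} {β : List ℕ} {x : Fin N} (ha : 0 < a) (hx : d x ≠ 0)
    (hmin : ∀ y < x, d y = 0) (hne : d x ≠ a) : coeff d (monQSym N (a :: β)) = 0 := by
  refine coeff_monQSym_eq_zero_iff.2 fun f hf hfd => ?_
  subst hfd
  obtain ⟨i, rfl⟩ := exists_eq_of_tupleExponent_apply_ne_zero hx
  have hfirst : tupleExponent (a :: β).get f (f 0) = a :=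
    tupleExponent_apply_of_injective _ hf.injective 0
  rcases (hf.monotone (Fin.zero_le i)).lt_or_eq with hlt | heq
  · exact ha.ne' (hfirst ▸ hmin _ hlt)
  · exact hne (heq ▸ hfirst)

end MonQSym

/-- For every positive integer `n`, every rational `c`, and every number of variables
`N ≥ n + 2`, the polynomial `M_{(2,1^n)} + c • M_{(1^{n+2})}` in `ℚ[x_1, …, x_N]` is
not a symmetric polynomial. -/
theorem quasiSchur_hook_not_symmetric (n : ℕ) (hn : 1 ≤ n) (c : ℚ) (N : ℕ) (hN : n + 2 ≤ N) :
    ¬ MvPolynomial.IsSymmetric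
        (monQSym N (2 :: List.replicate n 1) + c • monQSym N (List.replicate (n + 2) 1)) := by
  intro hsym
  set α := 2 :: List.replicate n 1
  have hlen : α.length ≤ N := by simp only [α, List.length_cons, List.length_replicate]; omega
  let g : Fin α.length → Fin N := Fin.castLE hlen
  have hg : StrictMono g := Fin.strictMono_castLE hlen
  let d := tupleExponent α.get g
  let x₀ : Fin N := ⟨0, by omega⟩
  let xₙ : Fin N := ⟨n, by omega⟩
  let σ := Equiv.swap x₀ xₙ
  have hd₀ : d x₀ = 2 := tupleExponent_apply_of_injective _ hg.injective ⟨0, by simp [α]⟩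
  have hdₙ : d xₙ = 1 := by
    rw [show xₙ = g ⟨n, by simp [α]⟩ from rfl, tupleExponent_apply_of_injective _ hg.injective]
    obtain ⟨m, rfl⟩ := Nat.exists_eq_add_of_le' hn
    simp [α]
  have hσd (x : Fin N) : mapDomain σ d (σ x) = d x := mapDomain_apply σ.injective d x
  have hσd₀ : mapDomain σ d x₀ = 1 := by rw [← hdₙ, ← hσd]; simp [σ]
  have hσdₙ : mapDomain σ d xₙ = 2 := by rw [← hd₀, ← hσd]; simp [σ]
  have hcoeff := congrArg (coeff (mapDomain σ d)) (hsym σ)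
  rw [coeff_rename_mapDomain _ σ.injective] at hcoeff
  have hsquarefree : 2 ∉ List.replicate (n + 2) 1 := by simp
  have hβd : coeff d (monQSym N (List.replicate (n + 2) 1)) = 0 :=
    coeff_monQSym_eq_zero_of_notMem (x := x₀) (by omega) (hd₀ ▸ hsquarefree)
  have hβσd : coeff (mapDomain σ d) (monQSym N (List.replicate (n + 2) 1)) = 0 :=
    coeff_monQSym_eq_zero_of_notMem (x := xₙ) (by omega) (hσdₙ ▸ hsquarefree)
  have hασd : coeff (mapDomain σ d) (monQSym N α) = 0 :=
    coeff_monQSym_cons_eq_zero (x := x₀) two_pos (by omega)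
      (fun y hy => absurd hy (Nat.not_lt_zero _)) (by omega)
  rw [coeff_add, coeff_add, coeff_smul, coeff_smul, hβd, hβσd, hασd] at hcoeff
  exact coeff_monQSym_tupleExponent_ne_zero hg (by simpa using hcoeff)
end

section
/- Let n ≥ 1 and suppose (Ψ_α), indexed by the compositions α of n and valued in the ring of formal power series over ℚ in countably many commuting variables, is a type-1 quasisymmetric power sum family for n. Then n! · M_{(1^n)} = Σ_{α ⊨ n} (−1)^{n − ℓ(α)} (n!/z_α) Ψ_α, where the sum runs over all compositions α of n. -/
/-- The set of partial sums `α₁ + ⋯ + α_j` for `1 ≤ j ≤ ℓ(α)` (including the total sum). -/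
def psums (α : List ℕ) : Finset ℕ :=
  (Finset.range α.length).image (fun i => (α.take (i + 1)).sum)

/-- The descent set `Set(α) = {α₁, α₁+α₂, …, α₁+⋯+α_{ℓ(α)-1}}` of a composition `α`. -/
def descSet (α : List ℕ) : Finset ℕ :=
  (Finset.range (α.length - 1)).image (fun i => (α.take (i + 1)).sum)

/-- When `α ⪰ β`, the last entry of the block `β^{(j)}` of `β` ending at the partial sum
`s = α₁ + ⋯ + α_j` equals `s` minus the largest partial sum of `β` strictly below `s`. -/
def lastBlockEntry (β : List ℕ) (s : ℕ) : ℕ :=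
  s - ((insert 0 (psums β)).filter (· < s)).sup id

/-- `lp(β, α)`: the product over the blocks `β^{(j)}` of `β` determined by `α ⪰ β`
of the last entry of `β^{(j)}`. -/
def lpProd (β α : List ℕ) : ℕ := ∏ s ∈ psums α, lastBlockEntry β s

/-- `z_α = ∏_i i^{m_i} m_i!`, where `m_i` is the number of parts of `α` equal to `i`. -/
def zComp (α : List ℕ) : ℕ :=
  ∏ i ∈ α.toFinset, i ^ α.count i * (α.count i).factorial

/-- The monomial quasisymmetric function `M_α` in the ring of formal power series over `ℚ`
in countably many commuting variables `x_0, x_1, x_2, …`: the coefficient of a monomial is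
`1` exactly when the exponents of its variables, listed in increasing order of the
variables, form the composition `α`. -/
noncomputable def Mqs (α : List ℕ) : MvPowerSeries ℕ ℚ :=
  fun d => if (d.support.sort (· ≤ ·)).map d = α then 1 else 0

open Classical in
/-- `Ψ` is a type-1 quasisymmetric power sum family for `n`: for every composition `β` of
`n`, `M_β = Σ_{α ⪰ β} (−1)^{ℓ(β) − ℓ(α)} (lp(β,α)/z_α) Ψ_α`. -/
noncomputable def IsType1PowerSumFamily (n : ℕ) (Ψ : Composition n → MvPowerSeries ℕ ℚ) : Prop :=
  ∀ β : Composition n,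
    Mqs β.blocks =
      ∑ α ∈ Finset.univ.filter
          (fun α : Composition n => descSet α.blocks ⊆ descSet β.blocks),
        ((-1 : ℚ) ^ (β.length - α.length) * ((lpProd β.blocks α.blocks : ℚ) / (zComp α.blocks : ℚ))) • Ψ α

/-!
Every composition `α` of `n` coarsens `(1^n)`, whose descent set is all of `{1, …, n-1}`, and each
block of `(1^n)` cut out by `α` ends in a `1`, so `lp((1^n), α) = 1`. The defining relation of the
family at `β = (1^n)` thus reads `M_{(1^n)} = Σ_α (−1)^{n − ℓ(α)} Ψ_α / z_α`; multiply by `n!`.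
-/

open Finset

lemma lastBlockEntry_eq_one {β : List ℕ} {s : ℕ} (hs : 0 < s)
    (hpred : s - 1 ∈ insert 0 (psums β)) : lastBlockEntry β s = 1 := by
  have hsup : ((insert 0 (psums β)).filter (· < s)).sup id = s - 1 :=
    le_antisymm (Finset.sup_le fun t ht => Nat.le_sub_one_of_lt (mem_filter.1 ht).2)
      (le_sup (f := id) (mem_filter.2 ⟨hpred, by omega⟩))
  rw [lastBlockEntry, hsup]
  omega

namespace Composition

variable {n : ℕ}

lemma psums_blocks (c : Composition n) :
    psums c.blocks = (range c.length).image fun i => c.sizeUpTo (i + 1) := rfl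

lemma descSet_blocks (c : Composition n) :
    descSet c.blocks = (range (c.length - 1)).image fun i => c.sizeUpTo (i + 1) := rfl

lemma psums_subset_Icc (c : Composition n) : psums c.blocks ⊆ Icc 1 n := by
  rw [psums_blocks]
  intro s hs
  obtain ⟨i, hi, rfl⟩ := mem_image.1 hs
  have := c.sizeUpTo_strict_mono (mem_range.1 hi)
  exact mem_Icc.2 ⟨by omega, c.sizeUpTo_le _⟩

lemma descSet_subset_Ioo (c : Composition n) : descSet c.blocks ⊆ Ioo 0 n := by
  rw [descSet_blocks]
  intro s hs
  obtain ⟨i, hi, rfl⟩ := mem_image.1 hs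
  have h₁ := c.sizeUpTo_strict_mono (i := i) (by rw [mem_range] at hi; omega)
  have h₂ := c.sizeUpTo_strict_mono (i := i + 1) (by rw [mem_range] at hi; omega)
  exact mem_Ioo.2 ⟨by omega, h₂.trans_le (c.sizeUpTo_le _)⟩

lemma psums_ones (n : ℕ) : psums (ones n).blocks = Icc 1 n := by
  ext s
  simp only [psums_blocks, ones_sizeUpTo, ones_length, mem_image, mem_range, mem_Icc]
  exact ⟨fun ⟨i, hi, hs⟩ => by omega, fun hs => ⟨s - 1, by omega, by omega⟩⟩

lemma descSet_ones (n : ℕ) : descSet (ones n).blocks = Ioo 0 n := by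
  ext s
  simp only [descSet_blocks, ones_sizeUpTo, ones_length, mem_image, mem_range, mem_Ioo]
  exact ⟨fun ⟨i, hi, hs⟩ => by omega, fun hs => ⟨s - 1, by omega, by omega⟩⟩

lemma descSet_subset_descSet_ones (c : Composition n) :
    descSet c.blocks ⊆ descSet (ones n).blocks :=
  (descSet_ones n).symm ▸ c.descSet_subset_Ioo

lemma lpProd_ones (c : Composition n) : lpProd (ones n).blocks c.blocks = 1 := by
  refine prod_eq_one fun s hs => ?_
  obtain ⟨hs₁, hsn⟩ := mem_Icc.1 (c.psums_subset_Icc hs)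
  refine lastBlockEntry_eq_one hs₁ ?_
  rw [psums_ones, mem_insert, mem_Icc]
  omega

end Composition

theorem factorial_smul_M_ones_general (n : ℕ)
    (Ψ : Composition n → MvPowerSeries ℕ ℚ) (hΨ : IsType1PowerSumFamily n Ψ) :
    (n.factorial : ℚ) • Mqs (List.replicate n 1) =
      ∑ α : Composition n,
        ((-1 : ℚ) ^ (n - α.length) * ((n.factorial : ℚ) / (zComp α.blocks : ℚ))) • Ψ α := by
  have hones := hΨ (Composition.ones n)
  rw [filter_true_of_mem fun α _ => α.descSet_subset_descSet_ones] at hones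
  rw [← Composition.ones_blocks, hones, smul_sum]
  refine sum_congr rfl fun α _ => ?_
  rw [smul_smul, Composition.lpProd_ones, Composition.ones_length, Nat.cast_one]
  congr 1
  ring

/-- For `n ≥ 1` and a type-1 quasisymmetric power sum family `Ψ` for `n`,
`n! · M_{(1^n)} = Σ_{α ⊨ n} (−1)^{n − ℓ(α)} (n!/z_α) Ψ_α`. -/
theorem factorial_smul_M_ones (n : ℕ) (hn : 1 ≤ n)
    (Ψ : Composition n → MvPowerSeries ℕ ℚ) (hΨ : IsType1PowerSumFamily n Ψ) :
    (n.factorial : ℚ) • Mqs (List.replicate n 1) =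
      ∑ α : Composition n,
        ((-1 : ℚ) ^ (n - α.length) * ((n.factorial : ℚ) / (zComp α.blocks : ℚ))) • Ψ α :=
  factorial_smul_M_ones_general n Ψ hΨ
end

section
/- Let n ≥ 3 and suppose (Ψ_α), indexed by the compositions α of n and valued in the ring of formal power series over ℚ in countably many commuting variables, is a type-1 quasisymmetric power sum family for n. Then n! · M_{(2,1^{n-2})} = 2 · Σ_{α ⊨ n, α_1 = 2} (−1)^{n − 1 − ℓ(α)} (n!/z_α) Ψ_α + Σ_{α ⊨ n, α_1 > 2} (−1)^{n − 1 − ℓ(α)} (n!/z_α) Ψ_α, where the first sum runs over all compositions α of n with first part equal to 2 and the second over all compositions α of n with first part greater than 2. -/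
/-!
The hook `β = (2,1^{n-2})` has descent set `{2, …, n-1}`, so `α ⪰ β` exactly when `α₁ ≥ 2`.
For such `α`, every block of `β` cut out by `α` ends in a part `1`, except that when `α₁ = 2`
the first block is the single part `2`; hence `lp(β, α)` is `2` if `α₁ = 2` and `1` otherwise.
Since `ℓ(β) = n - 1`, multiplying the defining expansion of `M_β` by `n!` gives the formula.
-/

namespace Composition

variable {n : ℕ} (c : Composition n)

theorem headI_blocks_eq_sizeUpTo_one : c.blocks.headI = c.sizeUpTo 1 := by
  rcases hb : c.blocks with _ | ⟨a, t⟩ <;> simp [sizeUpTo, hb]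

theorem mem_psums_iff {s : ℕ} :
    s ∈ psums c.blocks ↔ ∃ i < c.length, c.sizeUpTo (i + 1) = s := by
  simp [psums, sizeUpTo, blocks_length]

theorem mem_descSet_iff {s : ℕ} :
    s ∈ descSet c.blocks ↔ ∃ i < c.length - 1, c.sizeUpTo (i + 1) = s := by
  simp [descSet, sizeUpTo, blocks_length]

theorem one_le_headI (hn : 0 < n) : 1 ≤ c.blocks.headI := by
  rw [headI_blocks_eq_sizeUpTo_one]
  have := c.sizeUpTo_strict_mono (c.length_pos_of_pos hn)
  rwa [sizeUpTo_zero] at this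

theorem headI_le : c.blocks.headI ≤ n :=
  c.headI_blocks_eq_sizeUpTo_one ▸ c.sizeUpTo_le 1

theorem headI_mem_psums (hn : 0 < n) : c.blocks.headI ∈ psums c.blocks :=
  c.mem_psums_iff.2 ⟨0, c.length_pos_of_pos hn, c.headI_blocks_eq_sizeUpTo_one.symm⟩

theorem psums_subset_Icc_s4 : psums c.blocks ⊆ Finset.Icc c.blocks.headI n := by
  intro s hs
  obtain ⟨i, -, rfl⟩ := c.mem_psums_iff.1 hs
  rw [Finset.mem_Icc, headI_blocks_eq_sizeUpTo_one]
  exact ⟨c.monotone_sizeUpTo (by omega), c.sizeUpTo_le _⟩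

theorem descSet_subset_Icc : descSet c.blocks ⊆ Finset.Icc 1 (n - 1) := by
  intro s hs
  obtain ⟨i, hi, rfl⟩ := c.mem_descSet_iff.1 hs
  have hn : 0 < n := by have := c.length_le; omega
  have h1 : 1 ≤ c.sizeUpTo 1 := c.headI_blocks_eq_sizeUpTo_one ▸ c.one_le_headI hn
  have hmono : c.sizeUpTo 1 ≤ c.sizeUpTo (i + 1) := c.monotone_sizeUpTo (by omega)
  have hlt : c.sizeUpTo (i + 1) < c.sizeUpTo (i + 2) := c.sizeUpTo_strict_mono (by omega)
  have hle : c.sizeUpTo (i + 2) ≤ n := c.sizeUpTo_le _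
  rw [Finset.mem_Icc]
  omega

theorem one_mem_descSet_iff (hn : 1 < n) : 1 ∈ descSet c.blocks ↔ c.blocks.headI = 1 := by
  rw [mem_descSet_iff, headI_blocks_eq_sizeUpTo_one]
  constructor
  · rintro ⟨i, -, hi⟩
    have := c.monotone_sizeUpTo (show 1 ≤ i + 1 by omega)
    have := c.headI_blocks_eq_sizeUpTo_one ▸ c.one_le_headI (by omega)
    omega
  · intro h1
    have hlen : c.length ≠ 1 := fun hlen => by
      have := c.sizeUpTo_length
      rw [hlen] at this
      omega
    exact ⟨0, by have := c.length_pos_of_pos (by omega : 0 < n); omega, h1⟩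

theorem descSet_subset_Icc_two_iff (hn : 1 < n) :
    descSet c.blocks ⊆ Finset.Icc 2 (n - 1) ↔ 2 ≤ c.blocks.headI := by
  have h1 := c.one_le_headI (by omega)
  constructor
  · intro h
    by_contra h2
    have := h ((c.one_mem_descSet_iff hn).2 (by omega))
    simp at this
  · intro h2 s hs
    have hs1 : s ≠ 1 := by
      rintro rfl
      have := (c.one_mem_descSet_iff hn).1 hs
      omega
    have := c.descSet_subset_Icc hs
    simp only [Finset.mem_Icc] at this ⊢
    omega

theorem sum_filter_two_le_headI {M : Type*} [AddCommMonoid M] (f : Composition n → M) :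
    ∑ α ∈ Finset.univ.filter (fun α : Composition n => 2 ≤ α.blocks.headI), f α =
      ∑ α ∈ Finset.univ.filter (fun α : Composition n => α.blocks.headI = 2), f α +
        ∑ α ∈ Finset.univ.filter (fun α : Composition n => 2 < α.blocks.headI), f α := by
  rw [← Finset.sum_union (Finset.disjoint_filter.2 fun _ _ h h' => by omega)]
  congr 1
  ext α
  simp only [Finset.mem_filter, Finset.mem_union, Finset.mem_univ, true_and]
  omega

end Composition

def hookComposition (n : ℕ) (hn : 2 ≤ n) : Composition n where
  blocks := 2 :: List.replicate (n - 2) 1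
  blocks_pos {i} hi := by
    rcases List.mem_cons.1 hi with rfl | h
    · omega
    · rw [List.eq_of_mem_replicate h]; omega
  blocks_sum := by simp; omega

section Hook

variable {n : ℕ}

theorem length_hookComposition (hn : 2 ≤ n) : (hookComposition n hn).length = n - 1 := by
  simp only [Composition.length, hookComposition, List.length_cons, List.length_replicate]
  omega

theorem blocks_hookComposition (hn : 2 ≤ n) :
    (hookComposition n hn).blocks = 2 :: List.replicate (n - 2) 1 :=
  rfl

theorem sum_take_hook (i : ℕ) :
    ((2 :: List.replicate (n - 2) 1).take (i + 1)).sum = 2 + min i (n - 2) := by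
  simp [List.take_replicate]

theorem psums_hook (hn : 2 ≤ n) : psums (2 :: List.replicate (n - 2) 1) = Finset.Icc 2 n := by
  ext s
  simp only [psums, Finset.mem_image, Finset.mem_range, sum_take_hook, List.length_cons,
    List.length_replicate, Finset.mem_Icc]
  exact ⟨by rintro ⟨i, hi, rfl⟩; omega, fun h => ⟨s - 2, by omega, by omega⟩⟩

theorem descSet_hook : descSet (2 :: List.replicate (n - 2) 1) = Finset.Icc 2 (n - 1) := by
  ext s
  simp only [descSet, Finset.mem_image, Finset.mem_range, sum_take_hook, List.length_cons,
    List.length_replicate, Finset.mem_Icc]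
  exact ⟨by rintro ⟨i, hi, rfl⟩; omega, fun h => ⟨s - 2, by omega, by omega⟩⟩

theorem lastBlockEntry_hook {s : ℕ} (h2 : 2 ≤ s) (hsn : s ≤ n) :
    lastBlockEntry (2 :: List.replicate (n - 2) 1) s = if s = 2 then 2 else 1 := by
  have hsup :
      ((insert 0 (Finset.Icc 2 n)).filter (· < s)).sup id = if s = 2 then 0 else s - 1 := by
    apply le_antisymm
    · refine Finset.sup_le fun x hx => ?_
      simp only [Finset.mem_filter, Finset.mem_insert, Finset.mem_Icc] at hx
      split_ifs <;> simp only [id] <;> omega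
    · split_ifs
      · exact Nat.zero_le _
      · refine Finset.le_sup (f := id) ?_
        simp only [Finset.mem_filter, Finset.mem_insert, Finset.mem_Icc]
        omega
  rw [lastBlockEntry, psums_hook (h2.trans hsn), hsup]
  split_ifs <;> omega

theorem lpProd_hook (c : Composition n) (h2 : 2 ≤ c.blocks.headI) :
    lpProd (2 :: List.replicate (n - 2) 1) c.blocks = if c.blocks.headI = 2 then 2 else 1 := by
  have hentry : ∀ s ∈ psums c.blocks,
      lastBlockEntry (2 :: List.replicate (n - 2) 1) s = if s = 2 then 2 else 1 := fun s hs => by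
    have := Finset.mem_Icc.1 (c.psums_subset_Icc_s4 hs)
    exact lastBlockEntry_hook (by omega) this.2
  have hmem : 2 ∈ psums c.blocks ↔ c.blocks.headI = 2 := by
    have hn : 0 < n := by have := c.headI_le; omega
    refine ⟨fun h => ?_, fun h => h ▸ c.headI_mem_psums hn⟩
    have := Finset.mem_Icc.1 (c.psums_subset_Icc_s4 h)
    omega
  rw [lpProd, Finset.prod_congr rfl hentry, Finset.prod_ite_eq' (psums c.blocks) 2 (fun _ => 2)]
  simp [hmem]

theorem descSet_subset_descSet_hook_iff (hn : 2 ≤ n) (c : Composition n) :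
    descSet c.blocks ⊆ descSet (hookComposition n hn).blocks ↔ 2 ≤ c.blocks.headI := by
  rw [blocks_hookComposition, descSet_hook]
  exact c.descSet_subset_Icc_two_iff (by omega)

end Hook

open Classical in
/-- For `n ≥ 3` and a type-1 quasisymmetric power sum family `Ψ` for `n`,
`n! · M_{(2,1^{n-2})} = 2 Σ_{α ⊨ n, α₁ = 2} (−1)^{n−1−ℓ(α)} (n!/z_α) Ψ_α
+ Σ_{α ⊨ n, α₁ > 2} (−1)^{n−1−ℓ(α)} (n!/z_α) Ψ_α`. -/
theorem factorial_smul_M_hook (n : ℕ) (hn : 3 ≤ n)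
    (Ψ : Composition n → MvPowerSeries ℕ ℚ) (hΨ : IsType1PowerSumFamily n Ψ) :
    (n.factorial : ℚ) • Mqs (2 :: List.replicate (n - 2) 1) =
      (2 : ℚ) • ∑ α ∈ Finset.univ.filter (fun α : Composition n => α.blocks.headI = 2),
          ((-1 : ℚ) ^ (n - 1 - α.length) * ((n.factorial : ℚ) / (zComp α.blocks : ℚ))) • Ψ α
        + ∑ α ∈ Finset.univ.filter (fun α : Composition n => 2 < α.blocks.headI),
          ((-1 : ℚ) ^ (n - 1 - α.length) * ((n.factorial : ℚ) / (zComp α.blocks : ℚ))) • Ψ α := by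
  have hn2 : 2 ≤ n := by omega
  have hcoeff (α : Composition n) (h2 : 2 ≤ α.blocks.headI) :
      (n.factorial : ℚ) * ((-1) ^ ((hookComposition n hn2).length - α.length) *
          ((lpProd (hookComposition n hn2).blocks α.blocks : ℚ) / zComp α.blocks)) =
        (if α.blocks.headI = 2 then 2 else 1) *
          ((-1) ^ (n - 1 - α.length) * ((n.factorial : ℚ) / zComp α.blocks)) := by
    rw [blocks_hookComposition, lpProd_hook α h2, length_hookComposition]
    split_ifs <;> push_cast <;> ring
  rw [← blocks_hookComposition hn2, hΨ, Finset.smul_sum,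
    Finset.filter_congr fun α _ => descSet_subset_descSet_hook_iff _ α,
    Composition.sum_filter_two_le_headI, Finset.smul_sum]
  congr 1
  · refine Finset.sum_congr rfl fun α hα => ?_
    have h2 := (Finset.mem_filter.1 hα).2
    rw [smul_smul, hcoeff α h2.ge, if_pos h2, smul_smul]
  · refine Finset.sum_congr rfl fun α hα => ?_
    have h2 := (Finset.mem_filter.1 hα).2
    rw [smul_smul, hcoeff α h2.le, if_neg h2.ne', one_mul]
end

section
/- Let n ≥ 2 and let T be the n × n tridiagonal 0–1 Toeplitz matrix with T_{i,j} = 1 if |i − j| = 1 and T_{i,j} = 0 otherwise. Then the second immanant satisfies d_2(T) = Σ_{σ ∈ S_n} sign(σ) · (f(σ) − 1) · ∏_{i=1}^n T_{i,σ(i)} = (−1)^{n/2 + 1} if n is even, and d_2(T) = 0 if n is odd, where f(σ) denotes the number of fixed points of σ. -/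
/-!
A permutation `σ` contributes only if `|σ i - i| = 1` for every `i`. Scanning the indices from
`0` upwards, such a `σ` is forced to be `(0 1)(2 3)⋯`: so none exists for odd `n`, and for even
`n` the sum has the single term `(-1)^(n/2) · (0 - 1) · 1`.
-/

/-- The `n × n` tridiagonal 0–1 Toeplitz matrix: `T i j = 1` iff `|i − j| = 1`. -/
def triToeplitz (n : ℕ) : Matrix (Fin n) (Fin n) ℤ :=
  fun i j => if (i : ℕ) + 1 = (j : ℕ) ∨ (j : ℕ) + 1 = (i : ℕ) then 1 else 0

open Equiv Equiv.Perm Finset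

def IsAdjacentPerm {n : ℕ} (σ : Perm (Fin n)) : Prop :=
  ∀ i : Fin n, (i : ℕ) + 1 = σ i ∨ (σ i : ℕ) + 1 = i

theorem prod_triToeplitz_of_isAdjacentPerm {n : ℕ} {σ : Perm (Fin n)} (hσ : IsAdjacentPerm σ) :
    ∏ i, triToeplitz n i (σ i) = 1 :=
  prod_eq_one fun i _ => if_pos (hσ i)

theorem prod_triToeplitz_of_not_isAdjacentPerm {n : ℕ} {σ : Perm (Fin n)}
    (hσ : ¬IsAdjacentPerm σ) : ∏ i, triToeplitz n i (σ i) = 0 := by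
  obtain ⟨i, hi⟩ := not_forall.mp hσ
  exact prod_eq_zero (mem_univ i) (if_neg hi)

def pairedIndex (i : ℕ) : ℕ := if i % 2 = 0 then i + 1 else i - 1

/-- Scanning from `0`: an even `i` cannot go to `i - 1`, which is the image of `i - 2`, and an odd
`i` cannot go to `i + 1`, as then nothing would be left to cover `i - 1`. -/
theorem IsAdjacentPerm.val_apply_eq_pairedIndex {n : ℕ} {σ : Perm (Fin n)}
    (hσ : IsAdjacentPerm σ) (i : Fin n) : (σ i : ℕ) = pairedIndex i := by
  induction' hi : (i : ℕ) using Nat.strong_induction_on with k ih generalizing i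
  subst hi
  have ih' : ∀ j : Fin n, (j : ℕ) < i → (σ j : ℕ) = pairedIndex j := fun j hj => ih j hj j rfl
  unfold pairedIndex
  split_ifs with hev
  · refine ((hσ i).resolve_right fun hdown => ?_).symm
    have hprev := ih' ⟨i - 2, by omega⟩ (by simp; omega)
    have : (⟨i - 2, by omega⟩ : Fin n) = i :=
      σ.injective (Fin.ext (by simp only [pairedIndex] at hprev; split_ifs at hprev <;> omega))
    simp [Fin.ext_iff] at this; omega
  · suffices hup : (i : ℕ) + 1 ≠ σ i by have := (hσ i).resolve_left hup; omega
    intro hup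
    obtain ⟨j, hj⟩ := σ.surjective ⟨i - 1, by omega⟩
    have hj' : (σ j : ℕ) = i - 1 := by simp [hj]
    rcases hσ j with hjup | hjdown
    · have := ih' j (by omega)
      simp only [pairedIndex] at this; split_ifs at this <;> omega
    · have : j = i := Fin.ext (by omega)
      subst this; omega

theorem not_isAdjacentPerm_of_odd {n : ℕ} (hn : Odd n) (σ : Perm (Fin n)) : ¬IsAdjacentPerm σ := by
  intro hσ
  obtain ⟨k, rfl⟩ := hn
  have := hσ.val_apply_eq_pairedIndex ⟨2 * k, by omega⟩
  simp [pairedIndex] at this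
  omega

/-- The matching `(0 1)(2 3)⋯` of `Fin (m * 2) ≃ Fin m × Fin 2`, which makes its sign a product. -/
def pairSwap (m : ℕ) : Perm (Fin (m * 2)) :=
  finProdFinEquiv.permCongr (prodCongrRight fun _ => swap 0 1)

theorem val_pairSwap_apply {m : ℕ} (i : Fin (m * 2)) : (pairSwap m i : ℕ) = pairedIndex i := by
  have hswap : ∀ x : Fin 2, ((swap 0 1 x : Fin 2) : ℕ) = 1 - x := by decide
  simp only [pairSwap, permCongr_apply, finProdFinEquiv_symm_apply, prodCongrRight_apply,
    finProdFinEquiv_apply_val, Fin.coe_divNat, pairedIndex]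
  rw [hswap, Fin.coe_modNat]
  split_ifs <;> omega

theorem sign_pairSwap (m : ℕ) : sign (pairSwap m) = (-1) ^ m := by
  rw [pairSwap, sign_permCongr, sign_prodCongrRight]
  simp

theorem IsAdjacentPerm.eq_pairSwap {m : ℕ} {σ : Perm (Fin (m * 2))} (hσ : IsAdjacentPerm σ) :
    σ = pairSwap m :=
  Equiv.ext fun i => Fin.ext <| by rw [hσ.val_apply_eq_pairedIndex, val_pairSwap_apply]

theorem isAdjacentPerm_pairSwap (m : ℕ) : IsAdjacentPerm (pairSwap m) := fun i => by
  rw [val_pairSwap_apply, pairedIndex]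
  split_ifs <;> omega

theorem pairSwap_apply_ne (m : ℕ) (i : Fin (m * 2)) : pairSwap m i ≠ i := fun h => by
  have := congrArg Fin.val h
  rw [val_pairSwap_apply, pairedIndex] at this
  split_ifs at this <;> omega

open Classical in
theorem secondImmanant_triToeplitz_general (n : ℕ) :
    ∑ σ : Equiv.Perm (Fin n),
        (Equiv.Perm.sign σ : ℤ) *
          (((Finset.univ.filter (fun i : Fin n => σ i = i)).card : ℤ) - 1) *
          ∏ i : Fin n, triToeplitz n i (σ i) =
      if Even n then (-1 : ℤ) ^ (n / 2 + 1) else 0 := by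
  split_ifs with hn
  · obtain ⟨m, rfl⟩ : ∃ m, n = m * 2 := ⟨n / 2, (Nat.div_mul_cancel hn.two_dvd).symm⟩
    rw [sum_eq_single (pairSwap m) (fun σ _ hσ => ?_) (fun h => absurd (mem_univ _) h)]
    · have hfix : univ.filter (fun i => pairSwap m i = i) = ∅ :=
        filter_false_of_mem fun i _ => pairSwap_apply_ne m i
      rw [hfix, prod_triToeplitz_of_isAdjacentPerm (isAdjacentPerm_pairSwap m), sign_pairSwap,
        Nat.mul_div_cancel m two_pos]
      simp [pow_succ]
    · rw [prod_triToeplitz_of_not_isAdjacentPerm (mt IsAdjacentPerm.eq_pairSwap hσ), mul_zero]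
  · refine sum_eq_zero fun σ _ => ?_
    rw [prod_triToeplitz_of_not_isAdjacentPerm
      (not_isAdjacentPerm_of_odd (Nat.not_even_iff_odd.mp hn) σ), mul_zero]

open Classical in
/-- For `n ≥ 2`, the second immanant
`d₂(T) = Σ_σ sign(σ)(f(σ) − 1) ∏ᵢ T_{i,σ(i)}` of the tridiagonal 0–1 Toeplitz matrix
equals `(−1)^{n/2+1}` when `n` is even and `0` when `n` is odd (`f(σ)` is the number of
fixed points of `σ`). -/
theorem secondImmanant_triToeplitz (n : ℕ) (hn : 2 ≤ n) :
    ∑ σ : Equiv.Perm (Fin n),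
        (Equiv.Perm.sign σ : ℤ) *
          (((Finset.univ.filter (fun i : Fin n => σ i = i)).card : ℤ) - 1) *
          ∏ i : Fin n, triToeplitz n i (σ i) =
      if Even n then (-1 : ℤ) ^ (n / 2 + 1) else 0 :=
  secondImmanant_triToeplitz_general n
end
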